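/- arXiv:1905.09605 — 4 statements merged into one kernel-verified Lean document; each statement's English description precedes it below -/
import Mathlib

section
/- Let d ≥ 1, let J : ℤ^d → ℝ satisfy (J1)–(J4), and let Λ ⊂ ℤ^d be a finite nonempty set. Let Δ^Λ be the Λ×Λ real matrix with entries (Δ^Λ)_{x,y} := J(y − x). Then −Δ^Λ is positive definite: for every f : Λ → ℝ with f ≠ 0 one has Σ_{x∈Λ} f(x)·(−Δ^Λ f)(x) > 0, where (Δ^Λ f)(x) := Σ_{y∈Λ} J(y−x) f(y). In particular Δ^Λ is invertible. -/
open scoped BigOperators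

/-- Euclidean norm of a point of `ℤ^d`. -/
noncomputable def znorm {d : ℕ} (x : Fin d → ℤ) : ℝ :=
  Real.sqrt (∑ i, ((x i : ℝ)) ^ 2)

/-- A function on `ℤ^d` is `ℤ^d`-symmetric if it is invariant under all permutations of the
coordinates and all sign changes of individual coordinates. -/
def ZdSymmetric {d : ℕ} (f : (Fin d → ℤ) → ℝ) : Prop :=
  (∀ (σ : Equiv.Perm (Fin d)) (x : Fin d → ℤ), f (x ∘ σ) = f x) ∧
  (∀ (i : Fin d) (x : Fin d → ℤ), f (Function.update x i (-(x i))) = f x)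

/-- `J₊(x) = J(x) 𝟙{x ≠ 0}`. -/
noncomputable def Jplus {d : ℕ} (J : (Fin d → ℤ) → ℝ) : (Fin d → ℤ) → ℝ :=
  fun x => if x = 0 then 0 else J x

/-- Assumptions (J1)–(J4). -/
structure SatisfiesJ {d : ℕ} (J : (Fin d → ℤ) → ℝ) : Prop where
  /-- (J1): `J(x) ≥ 0` for `x ≠ 0`. -/
  nonneg : ∀ x, x ≠ 0 → 0 ≤ J x
  /-- (J1): the sum `Σ_{x ≠ 0} J(x)` is finite. -/
  sum_finite : Summable (Jplus J)
  /-- (J1): `J(0) = −Σ_{x ≠ 0} J(x)`. -/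
  zero_eq : J 0 = -∑' x, Jplus J x
  /-- (J2): `{x : J(x) > 0}` generates `ℤ^d`. -/
  gen : AddSubgroup.closure {x : Fin d → ℤ | 0 < J x} = ⊤
  /-- (J3): `J` is `ℤ^d`-symmetric. -/
  symm : ZdSymmetric J
  /-- (J4): `J` has finite range. -/
  finRange : ∃ R > (0 : ℝ), ∀ x, R ≤ znorm x → J x = 0

lemma jplus_support_finite {d : ℕ} (J : (Fin d → ℤ) → ℝ)
    (h : ∃ R > (0 : ℝ), ∀ x, R ≤ znorm x → J x = 0) :
    (Function.support (Jplus J)).Finite := by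
  obtain ⟨R, hR, hz⟩ := h
  have hsub : Function.support (Jplus J) ⊆
      Set.pi Set.univ (fun _ : Fin d => (↑(Finset.Icc (-⌈R⌉) ⌈R⌉) : Set ℤ)) := by
    intro x hx
    have hJx : J x ≠ 0 := by
      intro h0
      apply hx
      simp [Jplus, h0]
    have hlt : znorm x < R := by
      by_contra hge
      exact hJx (hz x (le_of_not_gt hge))
    intro i _
    have h1 : ((x i : ℝ)) ^ 2 ≤ ∑ j, ((x j : ℝ)) ^ 2 :=
      Finset.single_le_sum (f := fun j => ((x j : ℝ))^2) (fun j _ => sq_nonneg _)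
        (Finset.mem_univ i)
    have h2 : |((x i : ℝ))| ≤ znorm x := by
      rw [← Real.sqrt_sq_eq_abs]
      exact Real.sqrt_le_sqrt h1
    have h3 : |((x i : ℝ))| < R := lt_of_le_of_lt h2 hlt
    have h4 : ((x i : ℝ)) ≤ (⌈R⌉ : ℝ) := le_trans (le_trans (le_abs_self _) h3.le) (Int.le_ceil R)
    have h5 : ((-⌈R⌉ : ℤ) : ℝ) ≤ (x i : ℝ) := by
      push_cast
      have := neg_abs_le ((x i : ℝ))
      linarith [Int.le_ceil R]
    simp only [Finset.coe_Icc, Set.mem_Icc]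
    exact ⟨by exact_mod_cast h5, by exact_mod_cast h4⟩
  exact Set.Finite.subset (Set.Finite.pi (fun i => (Finset.Icc (-⌈R⌉) ⌈R⌉).finite_toSet)) hsub

/-- For a finite nonempty `Λ ⊂ ℤ^d`, the matrix `−Δ^Λ` with
`(Δ^Λ)_{x,y} = J(y−x)` is positive definite; in particular `Δ^Λ` is invertible. -/
theorem stmt_5 {d : ℕ} (hd : 1 ≤ d) (J : (Fin d → ℤ) → ℝ) (hJ : SatisfiesJ J)
    (Λ : Finset (Fin d → ℤ)) (hΛ : Λ.Nonempty) :
    (∀ f : (Fin d → ℤ) → ℝ, (∃ x ∈ Λ, f x ≠ 0) →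
      0 < ∑ x ∈ Λ, f x * (-(∑ y ∈ Λ, J (y - x) * f y))) ∧
    IsUnit (Matrix.of fun x y : {a // a ∈ Λ} =>
      J ((y : Fin d → ℤ) - (x : Fin d → ℤ))) := by
  classical
  have hfin : (Function.support (Jplus J)).Finite := jplus_support_finite J hJ.finRange
  set T : Finset (Fin d → ℤ) := hfin.toFinset with hT
  have hmemT : ∀ z, z ∈ T ↔ Jplus J z ≠ 0 := by
    intro z; simp [hT, Function.mem_support]
  have hT0 : (0 : Fin d → ℤ) ∉ T := by simp [hmemT, Jplus]
  have hJT : ∀ z ∈ T, Jplus J z = J z := by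
    intro z hz
    have hne : z ≠ 0 := fun h => hT0 (h ▸ hz)
    simp [Jplus, hne]
  have hJout : ∀ z, z ≠ 0 → z ∉ T → J z = 0 := by
    intro z h0 hz
    have : Jplus J z = 0 := by
      by_contra h; exact hz ((hmemT z).mpr h)
    simpa [Jplus, h0] using this
  have hJ0 : J 0 = -∑ z ∈ T, J z := by
    rw [hJ.zero_eq]
    congr 1
    rw [tsum_eq_sum (s := T) (fun b hb => by
      by_contra h; exact hb ((hmemT b).mpr h))]
    exact Finset.sum_congr rfl hJT
  have hTnonneg : ∀ z ∈ T, 0 ≤ J z := by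
    intro z hz
    exact hJ.nonneg z (fun h => hT0 (h ▸ hz))
  have hJ0le : J 0 ≤ 0 := by
    rw [hJ0]
    exact neg_nonpos.mpr (Finset.sum_nonneg hTnonneg)
  have hzT : ∀ z, 0 < J z → z ∈ T := by
    intro z hz
    have hne : z ≠ 0 := by rintro rfl; linarith
    exact (hmemT z).mpr (by simp [Jplus, hne]; linarith)
  have main : ∀ f : (Fin d → ℤ) → ℝ, (∃ x ∈ Λ, f x ≠ 0) →
      0 < ∑ x ∈ Λ, f x * (-(∑ y ∈ Λ, J (y - x) * f y)) := by
    rintro f ⟨x₀, hx₀, hfx₀⟩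
    set g : (Fin d → ℤ) → ℝ := fun a => if a ∈ Λ then f a else 0 with hg
    have hgΛ : ∀ x ∈ Λ, g x = f x := fun x hx => if_pos hx
    have hgn : ∀ x, x ∉ Λ → g x = 0 := fun x hx => if_neg hx
    set Ω : Finset (Fin d → ℤ) := Λ ∪ T.biUnion (fun z => Λ.image (fun y => y - z)) with hΩ
    have hΛΩ : Λ ⊆ Ω := Finset.subset_union_left
    have hsubΩ : ∀ z ∈ T, ∀ y ∈ Λ, y - z ∈ Ω := by
      intro z hz y hy
      exact Finset.mem_union_right _
        (Finset.mem_biUnion.mpr ⟨z, hz, Finset.mem_image_of_mem _ hy⟩)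
    -- L1
    have L1 : ∀ x, ∑ z ∈ T, J z * g (x + z) = ∑ y ∈ Λ.erase x, J (y - x) * g y := by
      intro x
      have e1 : ∑ z ∈ T, J z * g (x + z)
          = ∑ y ∈ T.image (fun z => x + z), J (y - x) * g y := by
        rw [Finset.sum_image (fun a _ b _ h => by simpa using h)]
        exact Finset.sum_congr rfl fun z _ => by rw [add_sub_cancel_left]
      rw [e1]
      have key1 : ∑ y ∈ T.image (fun z => x + z), J (y - x) * g y
          = ∑ y ∈ T.image (fun z => x + z) ∪ Λ.erase x, J (y - x) * g y := by
        apply Finset.sum_subset Finset.subset_union_left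
        intro y hy hyn
        have hy2 : y ∈ Λ.erase x := (Finset.mem_union.mp hy).resolve_left hyn
        have hnotT : y - x ∉ T := fun hmem =>
          hyn (Finset.mem_image.mpr ⟨y - x, hmem, by abel⟩)
        have hne : y - x ≠ 0 := sub_ne_zero.mpr (Finset.ne_of_mem_erase hy2)
        rw [hJout _ hne hnotT, zero_mul]
      have key2 : ∑ y ∈ Λ.erase x, J (y - x) * g y
          = ∑ y ∈ T.image (fun z => x + z) ∪ Λ.erase x, J (y - x) * g y := by
        apply Finset.sum_subset Finset.subset_union_right
        intro y hy hyn
        have hy2 : y ∈ T.image (fun z => x + z) := (Finset.mem_union.mp hy).resolve_right hyn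
        have hyx : y ≠ x := by
          rintro rfl
          obtain ⟨z, hzT', hze⟩ := Finset.mem_image.mp hy2
          have hz0 : z = 0 := by
            have := hze
            have : y + z = y := this
            simpa using congrArg (fun w => w - y) this
          exact hT0 (hz0 ▸ hzT')
        have hyΛ : y ∉ Λ := fun hyΛ => hyn (Finset.mem_erase.mpr ⟨hyx, hyΛ⟩)
        rw [hgn y hyΛ, mul_zero]
      rw [key1, key2]
    -- L2
    have hsum_sq : ∑ x ∈ Ω, g x ^ 2 = ∑ x ∈ Λ, g x ^ 2 := by
      symm
      apply Finset.sum_subset hΛΩ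
      intro y _ hyn
      rw [hgn y hyn]; ring
    have L2 : ∀ z ∈ T, ∑ x ∈ Ω, g (x + z) ^ 2 = ∑ x ∈ Ω, g x ^ 2 := by
      intro z hz
      have e1 : ∑ x ∈ Ω, g (x + z) ^ 2 = ∑ y ∈ Ω.image (fun x => x + z), g y ^ 2 := by
        rw [Finset.sum_image (fun a _ b _ h => by simpa using h)]
      rw [e1, hsum_sq]
      symm
      apply Finset.sum_subset
      · intro y hy
        exact Finset.mem_image.mpr ⟨y - z, hsubΩ z hz y hy, by abel⟩
      · intro y _ hyn
        rw [hgn y hyn]; ring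
    -- main identity
    have step1 : ∀ x ∈ Λ, ∑ y ∈ Λ, J (y - x) * f y
        = J 0 * g x + ∑ z ∈ T, J z * g (x + z) := by
      intro x hx
      rw [L1 x, ← Finset.add_sum_erase Λ (fun y => J (y - x) * f y) hx]
      congr 1
      · rw [sub_self, hgΛ x hx]
      · exact Finset.sum_congr rfl fun y hy => by
          rw [hgΛ y (Finset.mem_of_mem_erase hy)]
    have Qeq : ∑ x ∈ Λ, f x * (-(∑ y ∈ Λ, J (y - x) * f y))
        = ∑ z ∈ T, (J z / 2 * ∑ x ∈ Ω, (g (x + z) - g x) ^ 2) := by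
      have step2 : ∑ x ∈ Λ, f x * (-(∑ y ∈ Λ, J (y - x) * f y))
          = ∑ x ∈ Λ, ∑ z ∈ T, (J z * g x ^ 2 - J z * (g (x + z) * g x)) := by
        refine Finset.sum_congr rfl fun x hx => ?_
        rw [step1 x hx, hJ0, ← hgΛ x hx]
        have expand : ∑ z ∈ T, (J z * g x ^ 2 - J z * (g (x + z) * g x))
            = (∑ z ∈ T, J z) * g x ^ 2 - (∑ z ∈ T, J z * g (x + z)) * g x := by
          rw [Finset.sum_sub_distrib, Finset.sum_mul, Finset.sum_mul]
          congr 1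
          exact Finset.sum_congr rfl fun z _ => by ring
        rw [expand]
        ring
      have step3 : ∑ x ∈ Λ, ∑ z ∈ T, (J z * g x ^ 2 - J z * (g (x + z) * g x))
          = ∑ x ∈ Ω, ∑ z ∈ T, (J z * g x ^ 2 - J z * (g (x + z) * g x)) := by
        apply Finset.sum_subset hΛΩ
        intro x _ hxn
        apply Finset.sum_eq_zero
        intro z _
        rw [hgn x hxn]; ring
      have step5 : ∀ z ∈ T, ∑ x ∈ Ω, (J z * g x ^ 2 - J z * (g (x + z) * g x))
          = J z / 2 * ∑ x ∈ Ω, (g (x + z) - g x) ^ 2 := by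
        intro z hz
        have lhs : ∑ x ∈ Ω, (J z * g x ^ 2 - J z * (g (x + z) * g x))
            = J z * (∑ x ∈ Ω, g x ^ 2) - J z * ∑ x ∈ Ω, (g (x + z) * g x) := by
          rw [Finset.sum_sub_distrib, Finset.mul_sum, Finset.mul_sum]
        have e : ∑ x ∈ Ω, (g (x + z) - g x) ^ 2
            = (∑ x ∈ Ω, g (x + z) ^ 2) - 2 * (∑ x ∈ Ω, (g (x + z) * g x))
              + (∑ x ∈ Ω, g x ^ 2) := by
          rw [Finset.mul_sum, ← Finset.sum_sub_distrib, ← Finset.sum_add_distrib]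
          exact Finset.sum_congr rfl fun x _ => by ring
        rw [lhs, e, L2 z hz]
        ring
      rw [step2, step3, Finset.sum_comm]
      exact Finset.sum_congr rfl step5
    -- existence of a positive term
    have hkey : ∃ z ∈ T, 0 < J z ∧ ∃ x ∈ Ω, g (x + z) ≠ g x := by
      by_contra hcon
      push_neg at hcon
      have inv : ∀ z, 0 < J z → ∀ x, g (x + z) = g x := by
        intro z hz x
        by_cases hx : x ∈ Ω
        · exact hcon z (hzT z hz) hz x hx
        · have hx1 : x ∉ Λ := fun h => hx (hΛΩ h)
          have hx2 : x + z ∉ Λ := fun h => by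
            have := hsubΩ z (hzT z hz) (x + z) h
            rw [add_sub_cancel_right] at this
            exact hx this
          rw [hgn _ hx1, hgn _ hx2]
      have invAll : ∀ v : Fin d → ℤ, ∀ x, g (x + v) = g x := by
        intro v
        have hv : v ∈ AddSubgroup.closure {x : Fin d → ℤ | 0 < J x} := by
          rw [hJ.gen]; trivial
        refine AddSubgroup.closure_induction
          (p := fun v _ => ∀ x, g (x + v) = g x)
          (fun z hz x => inv z hz x) (fun x => by rw [add_zero]) ?_ ?_ hv
        · intro a b _ _ ha hb x
          rw [← add_assoc, hb, ha]
        · intro a _ ha x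
          have h := ha (x + -a)
          rw [neg_add_cancel_right] at h
          exact h.symm
      have hconst : ∀ x y : Fin d → ℤ, g x = g y := by
        intro x y
        have h := invAll (x - y) y
        have e : y + (x - y) = x := by abel
        rw [e] at h
        exact h
      have hinf : Infinite (Fin d → ℤ) :=
        Infinite.of_injective (fun n : ℤ => fun _ => n)
          (fun a b h => congrFun h ⟨0, hd⟩)
      obtain ⟨p, hp⟩ := Infinite.exists_notMem_finset Λ
      exact hfx₀ (by rw [← hgΛ x₀ hx₀, hconst x₀ p, hgn p hp])
    rw [Qeq]
    obtain ⟨z, hzT', hJz, x, hxΩ, hne⟩ := hkey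
    apply Finset.sum_pos'
    · intro w hw
      exact mul_nonneg (by linarith [hTnonneg w hw])
        (Finset.sum_nonneg fun x _ => sq_nonneg _)
    · refine ⟨z, hzT', ?_⟩
      apply mul_pos (by linarith)
      apply Finset.sum_pos'
      · exact fun x _ => sq_nonneg _
      · exact ⟨x, hxΩ, lt_of_le_of_ne (sq_nonneg _)
          (Ne.symm (pow_ne_zero 2 (sub_ne_zero.mpr hne)))⟩
  refine ⟨main, ?_⟩
  set M : Matrix {a // a ∈ Λ} {a // a ∈ Λ} ℝ :=
    Matrix.of (fun x y : {a // a ∈ Λ} => J ((y : Fin d → ℤ) - (x : Fin d → ℤ))) with hM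
  rw [Matrix.isUnit_iff_isUnit_det, isUnit_iff_ne_zero]
  intro hdet
  obtain ⟨v, hv, hmv⟩ := Matrix.exists_mulVec_eq_zero_iff.mpr hdet
  set f : (Fin d → ℤ) → ℝ := fun a => if h : a ∈ Λ then v ⟨a, h⟩ else 0 with hf
  have hfv : ∀ j : {a // a ∈ Λ}, f (j : Fin d → ℤ) = v j := by
    intro j
    simp [hf, j.2]
  have hex : ∃ x ∈ Λ, f x ≠ 0 := by
    have : ∃ j, v j ≠ 0 := by
      by_contra h
      push_neg at h
      exact hv (funext h)
    obtain ⟨j, hj⟩ := this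
    exact ⟨j, j.2, by rw [hfv j]; exact hj⟩
  have hpos := main f hex
  have hzero : ∀ x : {a // a ∈ Λ}, ∑ y ∈ Λ, J (y - (x : Fin d → ℤ)) * f y = 0 := by
    intro x
    have h1 : ∑ y ∈ Λ, J (y - (x : Fin d → ℤ)) * f y
        = ∑ j : {a // a ∈ Λ}, J ((j : Fin d → ℤ) - (x : Fin d → ℤ)) * v j := by
      rw [← Finset.sum_coe_sort Λ (fun y => J (y - (x : Fin d → ℤ)) * f y)]
      exact Finset.sum_congr rfl fun j _ => by rw [hfv j]
    have h2 : ∑ j : {a // a ∈ Λ}, J ((j : Fin d → ℤ) - (x : Fin d → ℤ)) * v j = 0 := by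
      have h3 := congrFun hmv x
      simpa [Matrix.mulVec, dotProduct, hM] using h3
    rw [h1, h2]
  have hQ0 : ∑ x ∈ Λ, f x * (-(∑ y ∈ Λ, J (y - x) * f y)) = 0 := by
    apply Finset.sum_eq_zero
    intro x hx
    have h := hzero ⟨x, hx⟩
    simp only [Subtype.coe_mk] at h
    rw [h, neg_zero, mul_zero]
  rw [hQ0] at hpos
  exact lt_irrefl 0 hpos
end

section
/- Let n ≥ 1 and let A be a real symmetric n×n matrix which is negative definite, i.e. vᵀAv < 0 for every nonzero v ∈ ℝⁿ. Then A is invertible, for all indices a, b the function t ↦ (exp(tA))_{a,b} is integrable on [0,∞), and ∫_{[0,∞)} (exp(tA))_{a,b} dt = ((−A)^{−1})_{a,b}, where exp denotes the matrix exponential. -/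
/-!
Diagonalise `A = U diag(λ) Uᴴ`; negative definiteness makes every `λᵢ < 0`. Both `exp (t • A)`
and `(-A)⁻¹` are then functions of `A` in the continuous functional calculus, so each entry of
`exp (t • A)` is a finite combination `∑ᵢ U a i * exp (t * λᵢ) * star (U b i)`. Integrating term
by term with `∫₀^∞ exp (t * λ) dt = (-λ)⁻¹` gives the same combination of the `(-λᵢ)⁻¹`, which is
the corresponding entry of `(-A)⁻¹`.
-/

open MeasureTheory
open scoped Matrix ComplexOrder

lemma integrableOn_exp_mul_Ici_zero {x : ℝ} (hx : x < 0) :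
    IntegrableOn (fun t => Real.exp (t * x)) (Set.Ici 0) := by
  simp_rw [mul_comm _ x]
  exact (integrableOn_Ici_iff_integrableOn_Ioi).mpr (integrableOn_exp_mul_Ioi hx 0)

lemma integral_exp_mul_Ici_zero {x : ℝ} (hx : x < 0) :
    ∫ t in Set.Ici 0, Real.exp (t * x) = (-x)⁻¹ := by
  simp_rw [integral_Ici_eq_integral_Ioi, mul_comm _ x, integral_exp_mul_Ioi hx 0]
  simp [div_eq_mul_inv, inv_neg]

namespace Matrix

variable {n 𝕜 : Type*} [Fintype n] [RCLike 𝕜]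

lemma posDef_neg_of_dotProduct_mulVec_neg {A : Matrix n n ℝ} (hA : A.IsSymm)
    (hneg : ∀ v : n → ℝ, v ≠ 0 → v ⬝ᵥ A *ᵥ v < 0) : (-A).PosDef := by
  refine posDef_iff_dotProduct_mulVec.mpr ⟨?_, fun v hv => ?_⟩
  · exact (isHermitian_iff_isSelfAdjoint.mpr hA).neg
  · simpa [neg_mulVec] using hneg v hv

variable [DecidableEq n]

lemma lt_zero_of_mem_spectrum_of_posDef_neg {A : Matrix n n 𝕜} (hA : (-A).PosDef) {x : ℝ}
    (hx : x ∈ spectrum ℝ A) : x < 0 := by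
  rw [← neg_neg x, ← Set.mem_neg, spectrum.neg_eq, hA.1.spectrum_real_eq_range_eigenvalues] at hx
  obtain ⟨i, hi⟩ := hx
  linarith [hA.eigenvalues_pos i]

lemma IsHermitian.cfc_apply_eq_sum {A : Matrix n n 𝕜} (hA : A.IsHermitian) (f : ℝ → ℝ)
    (a b : n) :
    cfc f A a b = ∑ i, (hA.eigenvectorUnitary : Matrix n n 𝕜) a i * (f (hA.eigenvalues i) : 𝕜) *
      star ((hA.eigenvectorUnitary : Matrix n n 𝕜) b i) := by
  rw [hA.cfc_eq, IsHermitian.cfc, Unitary.conjStarAlgAut_apply, mul_apply]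
  simp [mul_diagonal]

section Integral

variable {α : Type*} [MeasurableSpace α] {μ : Measure α} {A : Matrix n n 𝕜} {F : α → ℝ → ℝ}

lemma IsHermitian.integrable_cfc_apply (hA : A.IsHermitian)
    (hF : ∀ x ∈ spectrum ℝ A, Integrable (F · x) μ) (a b : n) :
    Integrable (fun t => cfc (F t) A a b) μ := by
  simp_rw [hA.cfc_apply_eq_sum]
  exact integrable_finsetSum _ fun i _ =>
    ((hF _ (hA.eigenvalues_mem_spectrum_real i)).ofReal.const_mul _).mul_const _

lemma IsHermitian.integral_cfc_apply (hA : A.IsHermitian)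
    (hF : ∀ x ∈ spectrum ℝ A, Integrable (F · x) μ) (a b : n) :
    ∫ t, cfc (F t) A a b ∂μ = cfc (fun x => ∫ t, F t x ∂μ) A a b := by
  simp_rw [hA.cfc_apply_eq_sum]
  rw [integral_finsetSum _ fun i _ =>
    ((hF _ (hA.eigenvalues_mem_spectrum_real i)).ofReal.const_mul _).mul_const _]
  simp_rw [integral_mul_const, integral_const_mul, integral_ofReal]

end Integral

-- `NormedSpace.exp` only sees the topology, so any algebra norm identifies it with `cfc Real.exp`.
open scoped Matrix.Norms.L2Operator in
lemma IsHermitian.exp_smul_eq_cfc {A : Matrix n n ℝ} (hA : A.IsHermitian) (t : ℝ) :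
    NormedSpace.exp (t • A) = cfc (fun x => Real.exp (t * x)) A := by
  rw [cfc_comp_const_mul t Real.exp A]
  exact (CFC.real_exp_eq_normedSpace_exp ((IsSelfAdjoint.all t).smul hA.isSelfAdjoint)).symm

end Matrix

theorem stmt_7_general (n : ℕ) (A : Matrix (Fin n) (Fin n) ℝ)
    (hsymm : A.IsSymm)
    (hneg : ∀ v : Fin n → ℝ, v ≠ 0 → v ⬝ᵥ A.mulVec v < 0) :
    IsUnit A ∧
    (∀ a b : Fin n,
      IntegrableOn (fun t : ℝ => NormedSpace.exp (t • A) a b) (Set.Ici 0)) ∧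
    (∀ a b : Fin n,
      ∫ t in Set.Ici (0 : ℝ), NormedSpace.exp (t • A) a b = (-A)⁻¹ a b) := by
  have hA : A.IsHermitian := Matrix.isHermitian_iff_isSelfAdjoint.mpr hsymm
  have hpos : (-A).PosDef := Matrix.posDef_neg_of_dotProduct_mulVec_neg hsymm hneg
  have hspec : ∀ x ∈ spectrum ℝ A, x < 0 :=
    fun _ => Matrix.lt_zero_of_mem_spectrum_of_posDef_neg hpos
  have hF : ∀ x ∈ spectrum ℝ A, IntegrableOn (fun t => Real.exp (t * x)) (Set.Ici 0) :=
    fun x hx => integrableOn_exp_mul_Ici_zero (hspec x hx)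
  have hinv : (-A)⁻¹ = cfc (fun x : ℝ => (-x)⁻¹) A := by
    rw [Matrix.nonsing_inv_eq_ringInverse,
      cfc_inv (fun x : ℝ => -x) A fun x hx => neg_ne_zero.mpr (hspec x hx).ne, cfc_neg_id A]
  simp_rw [hA.exp_smul_eq_cfc]
  refine ⟨by simpa using hpos.isUnit.neg, hA.integrable_cfc_apply hF, fun a b => ?_⟩
  rw [hA.integral_cfc_apply hF, hinv,
    cfc_congr fun x hx => integral_exp_mul_Ici_zero (hspec x hx)]

/-- If `A` is a real symmetric negative-definite `n×n` matrix (`n ≥ 1`),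
then `A` is invertible, `t ↦ (exp(tA))_{a,b}` is integrable on `[0,∞)`, and
`∫_{[0,∞)} (exp(tA))_{a,b} dt = ((−A)⁻¹)_{a,b}`. -/
theorem stmt_7 (n : ℕ) (hn : 1 ≤ n) (A : Matrix (Fin n) (Fin n) ℝ)
    (hsymm : A.IsSymm)
    (hneg : ∀ v : Fin n → ℝ, v ≠ 0 → v ⬝ᵥ A.mulVec v < 0) :
    IsUnit A ∧
    (∀ a b : Fin n,
      IntegrableOn (fun t : ℝ => NormedSpace.exp (t • A) a b) (Set.Ici 0)) ∧
    (∀ a b : Fin n,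
      ∫ t in Set.Ici (0 : ℝ), NormedSpace.exp (t • A) a b = (-A)⁻¹ a b) :=
  stmt_7_general n A hsymm hneg
end

section
/- Let d ≥ 5. There exists a constant C > 0, depending only on d, such that for all u, v ∈ ℤ^d: Σ_{w∈ℤ^d} ⟨w⟩^{4−2d} ⟨w−v⟩^{2−d} ⟨w−u⟩^{2−d} ≤ C ⟨v⟩^{2−d} ⟨u⟩^{2−d}. -/
open scoped BigOperators

/-- `⟨x⟩ = max(|x|, 1)`. -/
noncomputable def zbra {d : ℕ} (x : Fin d → ℤ) : ℝ := max (znorm x) 1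

/-!
Write `e = 2 - d ≤ 0` and `A, B, C` for `⟨w⟩^e, ⟨w - v⟩^e, ⟨w - u⟩^e`. Since
`⟨v⟩ ≤ ⟨w⟩ + ⟨w - v⟩`, one of `⟨w⟩, ⟨w - v⟩` is at least `⟨v⟩ / 2`, so
`min A B ≤ 2^{-e} ⟨v⟩^e`; likewise `min A C ≤ 2^{-e} ⟨u⟩^e`. Hence the summand
`A²BC = (min A B · min A C) (max A B · max A C)` is at most
`4^{-e} ⟨v⟩^e ⟨u⟩^e (A² + B² + C²)`. Summed over `w`, each of the three terms is a translate
of `∑_w ⟨w⟩^{4-2d}`, a lattice `p`-series that converges because `4 - 2d < -d` for `d ≥ 5`.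
-/

lemma rpow_two_mul_eq_sq {x : ℝ} (hx : 0 ≤ x) (e : ℝ) : x ^ (2 * e) = (x ^ e) ^ 2 := by
  rw [← Real.rpow_mul_natCast hx, mul_comm]; norm_num

lemma min_rpow_le_of_le_add {e a b p : ℝ} (he : e ≤ 0) (hp : 0 < p) (hpab : p ≤ a + b) :
    min (a ^ e) (b ^ e) ≤ 2 ^ (-e) * p ^ e := by
  have hhalf : 2 ^ (-e) * p ^ e = (p / 2) ^ e := by
    rw [Real.div_rpow hp.le zero_le_two, Real.rpow_neg zero_le_two, div_eq_inv_mul]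
  rw [hhalf]
  rcases le_total a b with hab | hab
  · exact (min_le_right _ _).trans (Real.rpow_le_rpow_of_nonpos (by positivity) (by linarith) he)
  · exact (min_le_left _ _).trans (Real.rpow_le_rpow_of_nonpos (by positivity) (by linarith) he)

lemma max_mul_max_le_sq_add_sq_add_sq (A B C : ℝ) :
    max A B * max A C ≤ A ^ 2 + B ^ 2 + C ^ 2 := by
  have hAB : max A B ^ 2 ≤ A ^ 2 + B ^ 2 := by
    rcases max_choice A B with h | h <;> rw [h] <;> nlinarith
  have hAC : max A C ^ 2 ≤ A ^ 2 + C ^ 2 := by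
    rcases max_choice A C with h | h <;> rw [h] <;> nlinarith
  nlinarith [sq_nonneg (max A B - max A C)]

lemma rpow_two_mul_mul_rpow_mul_rpow_le {e a b c p q : ℝ} (he : e ≤ 0) (ha : 0 ≤ a)
    (hb : 0 ≤ b) (hc : 0 ≤ c) (hp : 0 < p) (hq : 0 < q) (hpab : p ≤ a + b) (hqac : q ≤ a + c) :
    a ^ (2 * e) * b ^ e * c ^ e ≤
      2 ^ (-(2 * e)) * p ^ e * q ^ e * (a ^ (2 * e) + b ^ (2 * e) + c ^ (2 * e)) := by
  have hmin_p := min_rpow_le_of_le_add he hp hpab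
  have hmin_q := min_rpow_le_of_le_add he hq hqac
  rw [rpow_two_mul_eq_sq ha, rpow_two_mul_eq_sq hb, rpow_two_mul_eq_sq hc, neg_mul_eq_mul_neg,
    rpow_two_mul_eq_sq zero_le_two]
  have hA := Real.rpow_nonneg ha e
  have hB := Real.rpow_nonneg hb e
  have hC := Real.rpow_nonneg hc e
  calc (a ^ e) ^ 2 * b ^ e * c ^ e
      = (min (a ^ e) (b ^ e) * min (a ^ e) (c ^ e)) *
          (max (a ^ e) (b ^ e) * max (a ^ e) (c ^ e)) := by
        rw [mul_mul_mul_comm, min_mul_max, min_mul_max]; ring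
    _ ≤ (2 ^ (-e) * p ^ e * (2 ^ (-e) * q ^ e)) *
          ((a ^ e) ^ 2 + (b ^ e) ^ 2 + (c ^ e) ^ 2) := by
        gcongr
        exact max_mul_max_le_sq_add_sq_add_sq _ _ _
    _ = _ := by ring

section Weight

variable {G : Type*} [AddGroup G] {ρ : G → ℝ} {e : ℝ}

lemma rpow_two_mul_mul_rpow_sub_mul_rpow_sub_le (hρ : ∀ x, 0 < ρ x)
    (hρ_sub : ∀ v w, ρ v ≤ ρ w + ρ (w - v)) (he : e ≤ 0) (u v w : G) :
    ρ w ^ (2 * e) * ρ (w - v) ^ e * ρ (w - u) ^ e ≤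
      2 ^ (-(2 * e)) * ρ v ^ e * ρ u ^ e *
        (ρ w ^ (2 * e) + ρ (w - v) ^ (2 * e) + ρ (w - u) ^ (2 * e)) :=
  rpow_two_mul_mul_rpow_mul_rpow_le he (hρ w).le (hρ _).le (hρ _).le (hρ v) (hρ u)
    (hρ_sub v w) (hρ_sub u w)

lemma hasSum_rpow_two_mul_add_shifts (hs : Summable fun w => ρ w ^ (2 * e)) (u v : G) :
    HasSum (fun w => ρ w ^ (2 * e) + ρ (w - v) ^ (2 * e) + ρ (w - u) ^ (2 * e))
      (3 * ∑' w, ρ w ^ (2 * e)) := by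
  have hshift (x : G) : HasSum (fun w => ρ (w - x) ^ (2 * e)) (∑' w, ρ w ^ (2 * e)) :=
    (Equiv.subRight x).hasSum_iff.mpr hs.hasSum
  convert (hs.hasSum.add (hshift v)).add (hshift u) using 1
  ring

lemma summable_rpow_two_mul_mul_rpow_sub_mul_rpow_sub (hρ : ∀ x, 0 < ρ x)
    (hρ_sub : ∀ v w, ρ v ≤ ρ w + ρ (w - v)) (he : e ≤ 0)
    (hs : Summable fun w => ρ w ^ (2 * e)) (u v : G) :
    Summable fun w => ρ w ^ (2 * e) * ρ (w - v) ^ e * ρ (w - u) ^ e :=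
  .of_nonneg_of_le (fun w => by have := hρ w; have := hρ (w - v); have := hρ (w - u); positivity)
    (rpow_two_mul_mul_rpow_sub_mul_rpow_sub_le hρ hρ_sub he u v)
    ((hasSum_rpow_two_mul_add_shifts hs u v).summable.mul_left _)

lemma tsum_rpow_two_mul_mul_rpow_sub_mul_rpow_sub_le (hρ : ∀ x, 0 < ρ x)
    (hρ_sub : ∀ v w, ρ v ≤ ρ w + ρ (w - v)) (he : e ≤ 0)
    (hs : Summable fun w => ρ w ^ (2 * e)) (u v : G) :
    ∑' w, ρ w ^ (2 * e) * ρ (w - v) ^ e * ρ (w - u) ^ e ≤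
      3 * 2 ^ (-(2 * e)) * (∑' w, ρ w ^ (2 * e)) * ρ v ^ e * ρ u ^ e := by
  have hsum := (hasSum_rpow_two_mul_add_shifts hs u v).mul_left
    (2 ^ (-(2 * e)) * ρ v ^ e * ρ u ^ e)
  calc _ ≤ 2 ^ (-(2 * e)) * ρ v ^ e * ρ u ^ e * (3 * ∑' w, ρ w ^ (2 * e)) :=
        hasSum_le (rpow_two_mul_mul_rpow_sub_mul_rpow_sub_le hρ hρ_sub he u v)
          (summable_rpow_two_mul_mul_rpow_sub_mul_rpow_sub hρ hρ_sub he hs u v).hasSum hsum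
    _ = _ := by ring

end Weight

section IntegerLattice

variable {d : ℕ}

noncomputable def intToEuclidean (x : Fin d → ℤ) : EuclideanSpace ℝ (Fin d) :=
  WithLp.toLp 2 fun i => (x i : ℝ)

lemma znorm_eq_norm_intToEuclidean (x : Fin d → ℤ) : znorm x = ‖intToEuclidean x‖ := by
  simp [znorm, intToEuclidean, EuclideanSpace.norm_eq]

lemma intToEuclidean_sub (x y : Fin d → ℤ) :
    intToEuclidean (x - y) = intToEuclidean x - intToEuclidean y := by
  ext i; simp [intToEuclidean]

lemma intToEuclidean_ne_zero {x : Fin d → ℤ} (hx : x ≠ 0) : intToEuclidean x ≠ 0 := by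
  contrapose! hx
  ext i
  simpa [intToEuclidean] using congrArg (· i) hx

lemma one_le_zbra (x : Fin d → ℤ) : 1 ≤ zbra x := le_max_right _ _

lemma zbra_pos (x : Fin d → ℤ) : 0 < zbra x := one_pos.trans_le (one_le_zbra x)

lemma zbra_le_add_zbra_sub (v w : Fin d → ℤ) : zbra v ≤ zbra w + zbra (w - v) := by
  have hnorm : znorm v ≤ znorm w + znorm (w - v) := by
    simpa only [znorm_eq_norm_intToEuclidean, intToEuclidean_sub, norm_sub_rev]
      using norm_le_insert' (intToEuclidean v) (intToEuclidean w)
  have := one_le_zbra w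
  have := one_le_zbra (w - v)
  exact max_le (hnorm.trans (add_le_add (le_max_left _ _) (le_max_left _ _))) (by linarith)

lemma summable_znorm_rpow {r : ℝ} (hr : r < -d) :
    Summable fun x : Fin d → ℤ => znorm x ^ r := by
  let b := (EuclideanSpace.basisFun (Fin d) ℝ).toBasis
  let bℤ := b.restrictScalars ℤ
  have hrank : Module.finrank ℤ (Submodule.span ℤ (Set.range b)) = d := by
    rw [Module.finrank_eq_card_basis bℤ, Fintype.card_fin]
  refine ((bℤ.equivFun.symm.toEquiv.summable_iff).mpr
    (ZLattice.summable_norm_rpow _ r (by rwa [hrank]))).congr fun x => ?_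
  rw [znorm_eq_norm_intToEuclidean]
  show ‖(bℤ.equivFun.symm x : EuclideanSpace ℝ (Fin d))‖ ^ r = _
  congr 2
  ext i
  simp only [Module.Basis.equivFun_symm_apply, Submodule.coe_sum, Submodule.coe_smul, bℤ,
    Module.Basis.restrictScalars_apply]
  simp [b, intToEuclidean, Pi.single_apply]

lemma summable_zbra_rpow {r : ℝ} (hr : r < -d) :
    Summable fun x : Fin d → ℤ => zbra x ^ r := by
  refine (summable_znorm_rpow hr).of_norm_bounded_eventually ?_
  filter_upwards [Filter.eventually_cofinite_ne 0] with x hx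
  have hpos : 0 < znorm x := by
    rw [znorm_eq_norm_intToEuclidean]; exact norm_pos_iff.mpr (intToEuclidean_ne_zero hx)
  rw [Real.norm_of_nonneg (Real.rpow_nonneg (zbra_pos x).le r)]
  exact Real.rpow_le_rpow_of_nonpos hpos (le_max_left _ _)
    (hr.le.trans (neg_nonpos.mpr d.cast_nonneg))

end IntegerLattice

/-- For `d ≥ 5` there is a constant `C > 0`, depending only on `d`, with
`Σ_w ⟨w⟩^{4−2d} ⟨w−v⟩^{2−d} ⟨w−u⟩^{2−d} ≤ C ⟨v⟩^{2−d} ⟨u⟩^{2−d}` for all `u, v ∈ ℤ^d`. -/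
theorem stmt_10 (d : ℕ) (hd : 5 ≤ d) :
    ∃ C > (0 : ℝ), ∀ u v : Fin d → ℤ,
      Summable (fun w : Fin d → ℤ =>
        zbra w ^ ((4 : ℝ) - 2 * d) * zbra (w - v) ^ ((2 : ℝ) - d) *
          zbra (w - u) ^ ((2 : ℝ) - d)) ∧
      (∑' w : Fin d → ℤ,
        zbra w ^ ((4 : ℝ) - 2 * d) * zbra (w - v) ^ ((2 : ℝ) - d) *
          zbra (w - u) ^ ((2 : ℝ) - d))
        ≤ C * zbra v ^ ((2 : ℝ) - d) * zbra u ^ ((2 : ℝ) - d) := by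
  have hd' : (5 : ℝ) ≤ d := by exact_mod_cast hd
  have he : (2 : ℝ) - d ≤ 0 := by linarith
  have hs : Summable fun w : Fin d → ℤ => zbra w ^ (2 * ((2 : ℝ) - d)) :=
    summable_zbra_rpow (by linarith)
  set S := ∑' w : Fin d → ℤ, zbra w ^ (2 * ((2 : ℝ) - d))
  have hS : 0 < S := hs.tsum_pos (fun w => (Real.rpow_pos_of_pos (zbra_pos w) _).le) 0
    (Real.rpow_pos_of_pos (zbra_pos 0) _)
  refine ⟨3 * 2 ^ (-(2 * ((2 : ℝ) - d))) * S, by positivity, fun u v => ?_⟩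
  rw [show (4 : ℝ) - 2 * d = 2 * (2 - d) by ring]
  exact ⟨summable_rpow_two_mul_mul_rpow_sub_mul_rpow_sub zbra_pos zbra_le_add_zbra_sub he hs u v,
    tsum_rpow_two_mul_mul_rpow_sub_mul_rpow_sub_le zbra_pos zbra_le_add_zbra_sub he hs u v⟩
end

section
/- Let d ≥ 1 and let a ≥ b > 0. There exists a constant C > 0, depending only on a, b and d, such that for all f, g : ℤ^d → ℝ with |f(x)| ≤ ⟨x⟩^{−a} and |g(x)| ≤ ⟨x⟩^{−b} for all x ∈ ℤ^d, the following hold. (i) If a > d, then for every x the convolution (f*g)(x) = Σ_{y∈ℤ^d} f(y)g(x−y) converges absolutely and |(f*g)(x)| ≤ C ⟨x⟩^{−b}. (ii) If a < d and a + b > d, then for every x the convolution converges absolutely and |(f*g)(x)| ≤ C ⟨x⟩^{d−(a+b)}. -/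
/-!
Replace `⟨y⟩` by the comparable sup-norm bracket `m y = max ‖y‖∞ 1` (`supBracket`), whose
level sets `{m y = n}` are cube boundaries with `O(n^{d-1})` points; a lattice sum `∑ F (m y)`
is then bounded by the one-dimensional sum `∑ n^{d-1} F n`, which is compared with an integral.
Since `m x ≤ m y + m (x - y)`, the longer of `y` and `x - y` has bracket at least `ρ = m x / 2`.
On the part where `y` is the shorter one, `⟨y⟩^{-a}⟨x-y⟩^{-b} ≤ ⟨y⟩^{-a} max(⟨y⟩, ρ)^{-b}`,
and on the other part the same bound holds in the variable `x - y`, because `b ≤ a` lets the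
larger exponent move to the shorter vector. Summing `n^{d-1-a} max(n, ρ)^{-b}` gives
`ρ^{-b}` if `a > d`, and `ρ^{d-a-b}` (from `n ≤ ρ` and `n > ρ` alike) if `a < d < a + b`.
-/

open scoped BigOperators

open Finset

namespace ZdConvolution

variable {d : ℕ}

lemma sum_Icc_rpow_sub_one_le {r : ℝ} (hr1 : r ≤ 1) (hr0 : r ≠ 0) {M N : ℕ} (hM : 1 ≤ M)
    (hMN : M ≤ N) :
    ∑ n ∈ Icc M N, (n : ℝ) ^ (r - 1) ≤ (M : ℝ) ^ (r - 1) + ((N : ℝ) ^ r - (M : ℝ) ^ r) / r := by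
  have hM0 : (0 : ℝ) < M := by exact_mod_cast hM
  have anti : AntitoneOn (fun x : ℝ => x ^ (r - 1)) (Set.Icc (M : ℝ) N) := fun x hx y _ hxy =>
    Real.rpow_le_rpow_of_nonpos (hM0.trans_le hx.1) hxy (by linarith)
  have hint : ∫ x in (M : ℝ)..N, x ^ (r - 1) = ((N : ℝ) ^ r - (M : ℝ) ^ r) / r := by
    rw [integral_rpow (Or.inr ⟨by contrapose! hr0; linarith, ?_⟩)]
    · simp
    · rw [Set.uIcc_of_le (by exact_mod_cast hMN)]
      exact fun h => hM0.not_ge h.1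
  have hsplit : ∑ n ∈ Icc M N, (n : ℝ) ^ (r - 1) =
      (M : ℝ) ^ (r - 1) + ∑ i ∈ Ico M N, (((i + 1 : ℕ) : ℝ)) ^ (r - 1) := by
    rw [← Finset.Ico_add_one_right_eq_Icc, sum_eq_sum_Ico_succ_bot (by omega),
      Finset.sum_Ico_add' (fun k : ℕ => (k : ℝ) ^ (r - 1))]
  rw [hsplit, ← hint]
  gcongr
  exact anti.sum_le_integral_Ico hMN

lemma sum_Icc_rpow_sub_one_le_of_neg {r : ℝ} (hr : r < 0) {M : ℕ} (hM : 1 ≤ M) (N : ℕ) :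
    ∑ n ∈ Icc M N, (n : ℝ) ^ (r - 1) ≤ (1 - 1 / r) * (M : ℝ) ^ r := by
  have hcoef : 0 ≤ 1 - 1 / r := by
    have : 1 / r < 0 := one_div_neg.mpr hr
    linarith
  rcases lt_or_ge N M with hNM | hMN
  · rw [Icc_eq_empty (by omega), sum_empty]
    positivity
  have hM1 : (1 : ℝ) ≤ M := by exact_mod_cast hM
  have hfirst : (M : ℝ) ^ (r - 1) ≤ (M : ℝ) ^ r :=
    Real.rpow_le_rpow_of_exponent_le hM1 (by linarith)
  have hrest : ((N : ℝ) ^ r - (M : ℝ) ^ r) / r ≤ -((M : ℝ) ^ r / r) := by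
    have hcancel : -((M : ℝ) ^ r / r) * r = -(M : ℝ) ^ r := by
      rw [neg_mul, div_mul_cancel₀ _ hr.ne]
    rw [div_le_iff_of_neg hr, hcancel]
    linarith [Real.rpow_nonneg (Nat.cast_nonneg N) r]
  calc ∑ n ∈ Icc M N, (n : ℝ) ^ (r - 1)
      ≤ (M : ℝ) ^ (r - 1) + ((N : ℝ) ^ r - (M : ℝ) ^ r) / r :=
        sum_Icc_rpow_sub_one_le (by linarith) hr.ne hM hMN
    _ ≤ (M : ℝ) ^ r + -((M : ℝ) ^ r / r) := add_le_add hfirst hrest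
    _ = (1 - 1 / r) * (M : ℝ) ^ r := by ring

lemma sum_Icc_rpow_sub_one_le_of_pos {r : ℝ} (hr : 0 < r) (N : ℕ) :
    ∑ n ∈ Icc 1 N, (n : ℝ) ^ (r - 1) ≤ (1 + 1 / r) * (N : ℝ) ^ r := by
  rcases Nat.eq_zero_or_pos N with rfl | hN
  · simp [Real.zero_rpow hr.ne']
  have hN1 : (1 : ℝ) ≤ N := by exact_mod_cast hN
  have hNr : 1 ≤ (N : ℝ) ^ r := Real.one_le_rpow hN1 hr.le
  rcases le_or_gt r 1 with hr1 | hr1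
  · calc ∑ n ∈ Icc 1 N, (n : ℝ) ^ (r - 1)
        ≤ ((1 : ℕ) : ℝ) ^ (r - 1) + ((N : ℝ) ^ r - ((1 : ℕ) : ℝ) ^ r) / r :=
          sum_Icc_rpow_sub_one_le hr1 hr.ne' le_rfl hN
      _ ≤ (N : ℝ) ^ r + (N : ℝ) ^ r / r := by
          simp only [Nat.cast_one, Real.one_rpow]
          gcongr
          linarith
      _ = (1 + 1 / r) * (N : ℝ) ^ r := by ring
  · calc ∑ n ∈ Icc 1 N, (n : ℝ) ^ (r - 1)
        ≤ ∑ _n ∈ Icc 1 N, (N : ℝ) ^ (r - 1) := by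
          gcongr with n hn
          exact_mod_cast (mem_Icc.mp hn).2
      _ = (N : ℝ) ^ r := by
          rw [sum_const, Nat.card_Icc, nsmul_eq_mul, Nat.add_sub_cancel,
            Real.rpow_sub_one (by positivity)]
          field_simp
      _ ≤ (1 + 1 / r) * (N : ℝ) ^ r := by
          nlinarith [one_div_pos.mpr hr]

lemma sum_filter_le_rpow_sub_one_le {r ρ : ℝ} (hr : 0 < r) (hρ : 0 ≤ ρ) (N : ℕ) :
    ∑ n ∈ Icc 1 N with ((n : ℕ) : ℝ) ≤ ρ, (n : ℝ) ^ (r - 1) ≤ (1 + 1 / r) * ρ ^ r := by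
  calc ∑ n ∈ Icc 1 N with ((n : ℕ) : ℝ) ≤ ρ, (n : ℝ) ^ (r - 1)
      ≤ ∑ n ∈ Icc 1 ⌊ρ⌋₊, (n : ℝ) ^ (r - 1) := by
        refine sum_le_sum_of_subset_of_nonneg (fun n hn => ?_) (fun _ _ _ => by positivity)
        rw [mem_filter, mem_Icc] at hn
        exact mem_Icc.mpr ⟨hn.1.1, Nat.le_floor hn.2⟩
    _ ≤ (1 + 1 / r) * (⌊ρ⌋₊ : ℝ) ^ r := sum_Icc_rpow_sub_one_le_of_pos hr _
    _ ≤ (1 + 1 / r) * ρ ^ r := by gcongr; exact Nat.floor_le hρ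

lemma sum_filter_lt_rpow_sub_one_le {r ρ : ℝ} (hr : r < 0) (hρ : 0 < ρ) (N : ℕ) :
    ∑ n ∈ Icc 1 N with ρ < ((n : ℕ) : ℝ), (n : ℝ) ^ (r - 1) ≤ (1 - 1 / r) * ρ ^ r := by
  have hcoef : 0 ≤ 1 - 1 / r := by
    have : 1 / r < 0 := one_div_neg.mpr hr
    linarith
  calc ∑ n ∈ Icc 1 N with ρ < ((n : ℕ) : ℝ), (n : ℝ) ^ (r - 1)
      ≤ ∑ n ∈ Icc (⌊ρ⌋₊ + 1) N, (n : ℝ) ^ (r - 1) := by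
        refine sum_le_sum_of_subset_of_nonneg (fun n hn => ?_) (fun _ _ _ => by positivity)
        rw [mem_filter, mem_Icc] at hn
        exact mem_Icc.mpr ⟨Nat.floor_lt hρ.le |>.mpr hn.2, hn.1.2⟩
    _ ≤ (1 - 1 / r) * ((⌊ρ⌋₊ + 1 : ℕ) : ℝ) ^ r := sum_Icc_rpow_sub_one_le_of_neg hr (by omega) _
    _ ≤ (1 - 1 / r) * ρ ^ r := by
        refine mul_le_mul_of_nonneg_left (Real.rpow_le_rpow_of_nonpos hρ ?_ hr.le) hcoef
        push_cast
        exact (Nat.lt_floor_add_one ρ).le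

/-- With `ρ = m x / 2`, `convWeight a b ρ (m y)` bounds `m(y)^{-a} m(x-y)^{-b}` whenever
`m y ≤ m (x - y)`, since then `m (x - y) ≥ max (m y) ρ`. -/
noncomputable def convWeight (a b ρ t : ℝ) : ℝ := t ^ (-a) * max t ρ ^ (-b)

lemma convWeight_nonneg (a b ρ : ℝ) {t : ℝ} (ht : 0 ≤ t) : 0 ≤ convWeight a b ρ t :=
  mul_nonneg (Real.rpow_nonneg ht _) (Real.rpow_nonneg (ht.trans (le_max_left _ _)) _)

lemma rpow_neg_mul_rpow_neg_le_convWeight {a b ρ p q : ℝ} (hb : 0 ≤ b) (hab : b ≤ a)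
    (hp : 0 < p) (hq : 0 < q) (hρ : 2 * ρ ≤ p + q) :
    p ^ (-a) * q ^ (-b) ≤ convWeight a b ρ p + convWeight a b ρ q := by
  rcases le_total p q with hpq | hqp
  · have hmax : max p ρ ≤ q := max_le hpq (by linarith)
    calc p ^ (-a) * q ^ (-b) ≤ convWeight a b ρ p := by
          refine mul_le_mul_of_nonneg_left ?_ (Real.rpow_nonneg hp.le _)
          exact Real.rpow_le_rpow_of_nonpos (hp.trans_le (le_max_left _ _)) hmax (by linarith)
      _ ≤ convWeight a b ρ p + convWeight a b ρ q :=
          le_add_of_nonneg_right (convWeight_nonneg a b ρ hq.le)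
  · set M := max q ρ
    have hM0 : 0 < M := hq.trans_le (le_max_left _ _)
    have hMp : M ≤ p := max_le hqp (by linarith)
    calc p ^ (-a) * q ^ (-b) ≤ M ^ (-a) * q ^ (-b) :=
          mul_le_mul_of_nonneg_right (Real.rpow_le_rpow_of_nonpos hM0 hMp (by linarith))
            (Real.rpow_nonneg hq.le _)
      -- `b ≤ a`: trading `M^{-(a-b)}` for `q^{-(a-b)}` can only increase the product
      _ = M ^ (-b) * M ^ (-(a - b)) * q ^ (-b) := by
          rw [← Real.rpow_add hM0]; ring_nf
      _ ≤ M ^ (-b) * q ^ (-(a - b)) * q ^ (-b) := by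
          refine mul_le_mul_of_nonneg_right (mul_le_mul_of_nonneg_left ?_ (by positivity))
            (Real.rpow_nonneg hq.le _)
          exact Real.rpow_le_rpow_of_nonpos hq (le_max_left _ _) (by linarith)
      _ = q ^ (-a) * M ^ (-b) := by
          rw [mul_assoc, ← Real.rpow_add hq, mul_comm]; ring_nf
      _ ≤ convWeight a b ρ p + convWeight a b ρ q :=
          le_add_of_nonneg_left (convWeight_nonneg a b ρ hp.le)

lemma pow_sub_one_mul_rpow_neg (hd : 1 ≤ d) {t : ℝ} (ht : 0 < t) (s : ℝ) :
    t ^ (d - 1) * t ^ (-s) = t ^ ((d - s) - 1) := by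
  rw [← Real.rpow_natCast, ← Real.rpow_add ht, Nat.cast_sub hd]
  ring_nf

lemma sum_convWeight_le_of_lt (hd : 1 ≤ d) {a b ρ : ℝ} (hda : d < a) (hb : 0 ≤ b) (hρ : 0 < ρ)
    (N : ℕ) :
    ∑ n ∈ Icc 1 N, (n : ℝ) ^ (d - 1) * convWeight a b ρ n ≤ (1 - 1 / (d - a)) * ρ ^ (-b) := by
  calc ∑ n ∈ Icc 1 N, (n : ℝ) ^ (d - 1) * convWeight a b ρ n
      ≤ ∑ n ∈ Icc 1 N, ρ ^ (-b) * (n : ℝ) ^ ((d - a) - 1) := by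
        refine sum_le_sum fun n hn => ?_
        have hn0 : (0 : ℝ) < n := by exact_mod_cast (mem_Icc.mp hn).1
        rw [convWeight, ← mul_assoc, pow_sub_one_mul_rpow_neg hd hn0, mul_comm]
        exact mul_le_mul_of_nonneg_right
          (Real.rpow_le_rpow_of_nonpos hρ (le_max_right _ _) (by linarith)) (by positivity)
    _ ≤ ρ ^ (-b) * ((1 - 1 / (d - a)) * ((1 : ℕ) : ℝ) ^ (d - a)) := by
        rw [← mul_sum]
        gcongr
        exact sum_Icc_rpow_sub_one_le_of_neg (by linarith) le_rfl N
    _ = (1 - 1 / (d - a)) * ρ ^ (-b) := by simp [mul_comm]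

lemma sum_convWeight_le_of_gt (hd : 1 ≤ d) {a b ρ : ℝ} (had : a < d) (habd : d < a + b)
    (hρ : 0 < ρ) (N : ℕ) :
    ∑ n ∈ Icc 1 N, (n : ℝ) ^ (d - 1) * convWeight a b ρ n ≤
      ((1 + 1 / (d - a)) + (1 - 1 / (d - (a + b)))) * ρ ^ (d - (a + b)) := by
  rw [← sum_filter_add_sum_filter_not _ (fun n : ℕ => (n : ℝ) ≤ ρ), add_mul]
  gcongr
  · calc ∑ n ∈ Icc 1 N with ((n : ℕ) : ℝ) ≤ ρ, (n : ℝ) ^ (d - 1) * convWeight a b ρ n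
        = ρ ^ (-b) * ∑ n ∈ Icc 1 N with ((n : ℕ) : ℝ) ≤ ρ, (n : ℝ) ^ ((d - a) - 1) := by
          rw [mul_sum]
          refine sum_congr rfl fun n hn => ?_
          obtain ⟨hn1, hnρ⟩ := mem_filter.mp hn
          have hn0 : (0 : ℝ) < n := by exact_mod_cast (mem_Icc.mp hn1).1
          rw [convWeight, max_eq_right hnρ, ← mul_assoc, pow_sub_one_mul_rpow_neg hd hn0, mul_comm]
      _ ≤ ρ ^ (-b) * ((1 + 1 / (d - a)) * ρ ^ (d - a)) := by
          gcongr
          exact sum_filter_le_rpow_sub_one_le (by linarith) hρ.le N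
      _ = (1 + 1 / (d - a)) * ρ ^ (d - (a + b)) := by
          rw [mul_left_comm, ← Real.rpow_add hρ]
          ring_nf
  · calc ∑ n ∈ Icc 1 N with ¬((n : ℕ) : ℝ) ≤ ρ, (n : ℝ) ^ (d - 1) * convWeight a b ρ n
        = ∑ n ∈ Icc 1 N with ρ < ((n : ℕ) : ℝ), (n : ℝ) ^ ((d - (a + b)) - 1) := by
          refine sum_congr (filter_congr fun n _ => not_le) fun n hn => ?_
          obtain ⟨hn1, hnρ⟩ := mem_filter.mp hn
          have hn0 : (0 : ℝ) < n := by exact_mod_cast (mem_Icc.mp hn1).1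
          rw [convWeight, max_eq_left hnρ.le, ← mul_assoc, pow_sub_one_mul_rpow_neg hd hn0,
            ← Real.rpow_add hn0]
          ring_nf
      _ ≤ (1 - 1 / (d - (a + b))) * ρ ^ (d - (a + b)) :=
          sum_filter_lt_rpow_sub_one_le (by linarith) hρ N

def supBracket (y : Fin d → ℤ) : ℕ := max (univ.sup fun i => (y i).natAbs) 1

lemma one_le_supBracket (y : Fin d → ℤ) : 1 ≤ supBracket y := le_max_right _ _

lemma supBracket_pos (y : Fin d → ℤ) : (0 : ℝ) < supBracket y :=
  Nat.cast_pos.mpr (one_le_supBracket y)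

lemma natAbs_le_supBracket (y : Fin d → ℤ) (i : Fin d) : (y i).natAbs ≤ supBracket y :=
  le_max_of_le_left (le_sup (f := fun i => (y i).natAbs) (mem_univ i))

lemma supBracket_eq_of_ne_zero {y : Fin d → ℤ} (hy : y ≠ 0) :
    supBracket y = univ.sup fun i => (y i).natAbs := by
  obtain ⟨i, hi⟩ := Function.ne_iff.mp hy
  exact max_eq_left <| (Int.natAbs_pos.mpr hi).trans_le <|
    le_sup (f := fun i => (y i).natAbs) (mem_univ i)

lemma supBracket_le_add (x y : Fin d → ℤ) : supBracket x ≤ supBracket y + supBracket (x - y) := by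
  refine max_le (Finset.sup_le fun i _ => ?_) (by linarith [one_le_supBracket y])
  calc (x i).natAbs = (y i + (x - y) i).natAbs := by simp
    _ ≤ (y i).natAbs + ((x - y) i).natAbs := Int.natAbs_add_le _ _
    _ ≤ supBracket y + supBracket (x - y) :=
      add_le_add (natAbs_le_supBracket y i) (natAbs_le_supBracket (x - y) i)

lemma abs_le_znorm (y : Fin d → ℤ) (i : Fin d) : |(y i : ℝ)| ≤ znorm y := by
  rw [znorm, ← Real.sqrt_sq_eq_abs]
  exact Real.sqrt_le_sqrt (single_le_sum (f := fun i => ((y i : ℝ)) ^ 2)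
    (fun i _ => sq_nonneg _) (mem_univ i))

lemma supBracket_le_zbra (y : Fin d → ℤ) : (supBracket y : ℝ) ≤ zbra y := by
  rw [supBracket, zbra, Nat.cast_max, Nat.cast_one]
  refine max_le_max (Finset.sup_induction (p := fun n : ℕ => (n : ℝ) ≤ znorm y)
    ?_ (fun m hm n hn => ?_) fun i _ => ?_) le_rfl
  · rw [bot_eq_zero', Nat.cast_zero]
    exact Real.sqrt_nonneg _
  · rw [Nat.cast_max]
    exact max_le hm hn
  · rw [Nat.cast_natAbs, Int.cast_abs]
    exact abs_le_znorm y i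

lemma zbra_le_sqrt_mul_supBracket (hd : 1 ≤ d) (y : Fin d → ℤ) :
    zbra y ≤ √d * supBracket y := by
  have hm : (1 : ℝ) ≤ supBracket y := by exact_mod_cast one_le_supBracket y
  have hd' : (1 : ℝ) ≤ √d := Real.one_le_sqrt.mpr (by exact_mod_cast hd)
  refine max_le ?_ (by nlinarith)
  have hsq : ∀ i, ((y i : ℝ)) ^ 2 ≤ (supBracket y : ℝ) ^ 2 := fun i => by
    rw [← sq_abs, ← Int.cast_abs, ← Nat.cast_natAbs]
    gcongr
    exact natAbs_le_supBracket y i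
  calc znorm y ≤ √(d * (supBracket y : ℝ) ^ 2) := by
        refine Real.sqrt_le_sqrt ((sum_le_sum fun i _ => hsq i).trans ?_)
        simp
    _ = √d * supBracket y := by rw [Real.sqrt_mul (by positivity), Real.sqrt_sq (by positivity)]

noncomputable def box (d n : ℕ) : Finset (Fin d → ℤ) := Fintype.piFinset fun _ => Icc (-(n : ℤ)) n

lemma mem_box {n : ℕ} {y : Fin d → ℤ} : y ∈ box d n ↔ ∀ i, (y i).natAbs ≤ n := by
  simp only [box, Fintype.mem_piFinset, mem_Icc]
  exact forall_congr' fun i => by omega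

lemma card_box (n : ℕ) : #(box d n) = (2 * n + 1) ^ d := by
  have : #(Icc (-(n : ℤ)) n) = 2 * n + 1 := by rw [Int.card_Icc]; omega
  simp [box, this]

lemma box_mono {n k : ℕ} (h : n ≤ k) : box d n ⊆ box d k :=
  fun _ hy => mem_box.mpr fun i => (mem_box.mp hy i).trans h

/-- `{m y = n}` is the boundary of the cube `box d n`, together with `0` when `n = 1`. -/
lemma card_filter_supBracket_eq_le (u : Finset (Fin d → ℤ)) {n : ℕ} (hn : 1 ≤ n) :
    #{y ∈ u | supBracket y = n} ≤ (2 * d * 3 ^ (d - 1) + 1) * n ^ (d - 1) := by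
  have hsub : {y ∈ u | supBracket y = n} ⊆ insert 0 (box d n \ box d (n - 1)) := by
    intro y hy
    rw [mem_filter] at hy
    rcases eq_or_ne y 0 with rfl | hy0
    · exact mem_insert_self _ _
    refine mem_insert_of_mem (mem_sdiff.mpr ⟨mem_box.mpr fun i => hy.2 ▸ natAbs_le_supBracket y i,
      fun hmem => ?_⟩)
    have := supBracket_eq_of_ne_zero hy0
    have := Finset.sup_le (s := univ) (f := fun i => (y i).natAbs) fun i _ => mem_box.mp hmem i
    omega
  have hshell : (2 * n + 1) ^ d - (2 * (n - 1) + 1) ^ d ≤ 2 * d * 3 ^ (d - 1) * n ^ (d - 1) := by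
    obtain ⟨k, rfl⟩ := Nat.exists_eq_add_of_le' hn
    have hle : (2 * k + 1) ^ d ≤ (2 * (k + 1) + 1) ^ d := Nat.pow_le_pow_left (by omega) d
    rw [Nat.add_sub_cancel]
    zify [hle]
    have hmax : max |(2 * (k + 1) + 1 : ℤ)| |(2 * k + 1 : ℤ)| ≤ 3 * (k + 1) := by
      rw [abs_of_nonneg (by positivity), abs_of_nonneg (by positivity)]
      omega
    calc (2 * ((k : ℤ) + 1) + 1) ^ d - (2 * k + 1) ^ d
        ≤ |(2 * ((k : ℤ) + 1) + 1) - (2 * k + 1)| * d *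
            max |(2 * ((k : ℤ) + 1) + 1)| |(2 * k + 1 : ℤ)| ^ (d - 1) :=
          (le_abs_self _).trans (abs_pow_sub_pow_le _ _ d)
      _ ≤ 2 * d * (3 * (k + 1)) ^ (d - 1) := by
          rw [show (2 * ((k : ℤ) + 1) + 1) - (2 * k + 1) = 2 by ring, abs_two]
          gcongr
      _ = 2 * d * 3 ^ (d - 1) * (k + 1) ^ (d - 1) := by rw [mul_pow]; ring
  calc #{y ∈ u | supBracket y = n} ≤ #(box d n \ box d (n - 1)) + 1 :=
        (card_le_card hsub).trans (card_insert_le _ _)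
    _ = (2 * n + 1) ^ d - (2 * (n - 1) + 1) ^ d + 1 := by
        rw [card_sdiff_of_subset (box_mono (by omega)), card_box, card_box]
    _ ≤ (2 * d * 3 ^ (d - 1) + 1) * n ^ (d - 1) := by
        have : 1 ≤ n ^ (d - 1) := Nat.one_le_pow _ _ hn
        nlinarith

lemma sum_comp_supBracket_le (F : ℕ → ℝ) (hF : ∀ n, 0 ≤ F n) (u : Finset (Fin d → ℤ)) :
    ∑ y ∈ u, F (supBracket y) ≤
      (2 * d * 3 ^ (d - 1) + 1) * ∑ n ∈ Icc 1 (u.sup supBracket), (n : ℝ) ^ (d - 1) * F n := by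
  rw [sum_comp, mul_sum]
  calc ∑ n ∈ u.image supBracket, #{y ∈ u | supBracket y = n} • F n
      ≤ ∑ n ∈ Icc 1 (u.sup supBracket), #{y ∈ u | supBracket y = n} • F n := by
        refine sum_le_sum_of_subset_of_nonneg (fun n hn => ?_) fun n _ _ => nsmul_nonneg (hF n) _
        obtain ⟨y, hy, rfl⟩ := mem_image.mp hn
        exact mem_Icc.mpr ⟨one_le_supBracket y, le_sup hy⟩
    _ ≤ ∑ n ∈ Icc 1 (u.sup supBracket), (2 * d * 3 ^ (d - 1) + 1) * ((n : ℝ) ^ (d - 1) * F n) := by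
        refine sum_le_sum fun n hn => ?_
        rw [nsmul_eq_mul, ← mul_assoc]
        gcongr
        · exact hF n
        · exact_mod_cast card_filter_supBracket_eq_le u (mem_Icc.mp hn).1

lemma summable_comp_supBracket {F : ℕ → ℝ} (hF : ∀ n, 0 ≤ F n) {B : ℝ}
    (hB : ∀ N : ℕ, ∑ n ∈ Icc 1 N, (n : ℝ) ^ (d - 1) * F n ≤ B) :
    Summable (fun y : Fin d → ℤ => F (supBracket y)) ∧
      ∑' y : Fin d → ℤ, F (supBracket y) ≤ (2 * d * 3 ^ (d - 1) + 1) * B := by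
  have hsum : ∀ u : Finset (Fin d → ℤ), ∑ y ∈ u, F (supBracket y) ≤ (2 * d * 3 ^ (d - 1) + 1) * B :=
    fun u => (sum_comp_supBracket_le F hF u).trans (by gcongr; exact hB _)
  have hs := summable_of_sum_le (fun y => hF _) hsum
  exact ⟨hs, hs.tsum_le_of_sum_le hsum⟩

lemma abs_le_supBracket_rpow {f : (Fin d → ℤ) → ℝ} {s : ℝ} (hs : 0 ≤ s)
    (hf : ∀ x, |f x| ≤ zbra x ^ (-s)) (y : Fin d → ℤ) : |f y| ≤ (supBracket y : ℝ) ^ (-s) :=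
  (hf y).trans <|
    Real.rpow_le_rpow_of_nonpos (supBracket_pos y) (supBracket_le_zbra y) (by linarith)

lemma half_supBracket_rpow_le (hd : 1 ≤ d) {s : ℝ} (hs : s ≤ 0) (x : Fin d → ℤ) :
    ((supBracket x : ℝ) / 2) ^ s ≤ (2 * √d) ^ (-s) * zbra x ^ s := by
  have hm := supBracket_pos x
  have hsd : 0 < √(d : ℝ) := Real.sqrt_pos.mpr (by exact_mod_cast hd)
  calc ((supBracket x : ℝ) / 2) ^ s = (2 * √d) ^ (-s) * (√d * supBracket x) ^ s := by
        rw [show (supBracket x : ℝ) / 2 = (√d * supBracket x) / (2 * √d) by field_simp,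
          Real.div_rpow (by positivity) (by positivity), Real.rpow_neg (by positivity)]
        ring
    _ ≤ (2 * √d) ^ (-s) * zbra x ^ s := by
        refine mul_le_mul_of_nonneg_left ?_ (by positivity)
        exact Real.rpow_le_rpow_of_nonpos (zero_lt_one.trans_le (le_max_right _ _))
          (zbra_le_sqrt_mul_supBracket hd x) hs

lemma abs_mul_le_convWeight {a b : ℝ} (hb : 0 ≤ b) (hab : b ≤ a) {f g : (Fin d → ℤ) → ℝ}
    (hf : ∀ x, |f x| ≤ zbra x ^ (-a)) (hg : ∀ x, |g x| ≤ zbra x ^ (-b)) (x y : Fin d → ℤ) :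
    |f y * g (x - y)| ≤ convWeight a b (supBracket x / 2) (supBracket y) +
      convWeight a b (supBracket x / 2) (supBracket (x - y)) := by
  rw [abs_mul]
  refine (mul_le_mul (abs_le_supBracket_rpow (hb.trans hab) hf y) (abs_le_supBracket_rpow hb hg _)
    (abs_nonneg _) (by positivity)).trans (rpow_neg_mul_rpow_neg_le_convWeight hb hab ?_ ?_ ?_)
  · exact supBracket_pos y
  · exact supBracket_pos (x - y)
  · rw [mul_div_cancel₀ _ two_ne_zero]
    exact_mod_cast supBracket_le_add x y

theorem exists_convolution_bound (hd : 1 ≤ d) {a b s B : ℝ} (hb : 0 ≤ b) (hab : b ≤ a)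
    (hs : s ≤ 0) (hB0 : 0 < B)
    (hB : ∀ ρ > 0, ∀ N : ℕ, ∑ n ∈ Icc 1 N, (n : ℝ) ^ (d - 1) * convWeight a b ρ n ≤ B * ρ ^ s) :
    ∃ C > 0, ∀ f g : (Fin d → ℤ) → ℝ,
      (∀ x, |f x| ≤ zbra x ^ (-a)) → (∀ x, |g x| ≤ zbra x ^ (-b)) → ∀ x : Fin d → ℤ,
        Summable (fun y : Fin d → ℤ => |f y * g (x - y)|) ∧
        |∑' y : Fin d → ℤ, f y * g (x - y)| ≤ C * zbra x ^ s := by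
  set K : ℝ := 2 * d * 3 ^ (d - 1) + 1
  refine ⟨2 * K * B * (2 * √d) ^ (-s), by positivity, fun f g hf hg x => ?_⟩
  set ρ : ℝ := supBracket x / 2
  have hρ : 0 < ρ := half_pos (supBracket_pos x)
  set W : (Fin d → ℤ) → ℝ := fun y => convWeight a b ρ (supBracket y)
  obtain ⟨hW, hWle⟩ := summable_comp_supBracket (d := d) (F := fun n => convWeight a b ρ n)
    (fun n => convWeight_nonneg a b ρ n.cast_nonneg) (hB ρ hρ)
  have hW' : Summable fun y => W (x - y) := hW.comp_injective (Equiv.subLeft x).injective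
  have hW'_tsum : ∑' y, W (x - y) = ∑' y, W y := (Equiv.subLeft x).tsum_eq W
  have hpt : ∀ y, |f y * g (x - y)| ≤ W y + W (x - y) := abs_mul_le_convWeight hb hab hf hg x
  have hsum : Summable fun y => |f y * g (x - y)| :=
    (hW.add hW').of_nonneg_of_le (fun _ => abs_nonneg _) hpt
  refine ⟨hsum, ?_⟩
  calc |∑' y, f y * g (x - y)| ≤ ∑' y, |f y * g (x - y)| := by
        simpa only [Real.norm_eq_abs] using
          norm_tsum_le_tsum_norm (f := fun y => f y * g (x - y)) (by simpa only [Real.norm_eq_abs])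
    _ ≤ ∑' y, (W y + W (x - y)) := hsum.tsum_le_tsum hpt (hW.add hW')
    _ = 2 * ∑' y, W y := by
        rw [hW.tsum_add hW', hW'_tsum]
        ring
    _ ≤ 2 * (K * (B * ρ ^ s)) := by gcongr
    _ ≤ 2 * K * B * ((2 * √d) ^ (-s) * zbra x ^ s) := by
        rw [← mul_assoc, ← mul_assoc]
        gcongr
        exact half_supBracket_rpow_le hd hs x
    _ = 2 * K * B * (2 * √d) ^ (-s) * zbra x ^ s := by ring

end ZdConvolution

open ZdConvolution

/-- Convolution estimate: if `|f(x)| ≤ ⟨x⟩^{−a}` and `|g(x)| ≤ ⟨x⟩^{−b}`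
with `a ≥ b > 0`, then `f*g` converges absolutely with `|(f*g)(x)| ≤ C⟨x⟩^{−b}` when `a > d`,
and `|(f*g)(x)| ≤ C⟨x⟩^{d−(a+b)}` when `a < d` and `a + b > d`. -/
theorem stmt_11 (d : ℕ) (hd : 1 ≤ d) (a b : ℝ) (hab : b ≤ a) (hb : 0 < b) :
    ∃ C > (0 : ℝ), ∀ f g : (Fin d → ℤ) → ℝ,
      (∀ x, |f x| ≤ zbra x ^ (-a)) → (∀ x, |g x| ≤ zbra x ^ (-b)) →
      (((d : ℝ) < a) → ∀ x : Fin d → ℤ,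
          Summable (fun y : Fin d → ℤ => |f y * g (x - y)|) ∧
          |∑' y : Fin d → ℤ, f y * g (x - y)| ≤ C * zbra x ^ (-b)) ∧
      ((a < d ∧ (d : ℝ) < a + b) → ∀ x : Fin d → ℤ,
          Summable (fun y : Fin d → ℤ => |f y * g (x - y)|) ∧
          |∑' y : Fin d → ℤ, f y * g (x - y)| ≤ C * zbra x ^ ((d : ℝ) - (a + b))) := by
  by_cases hda : (d : ℝ) < a
  · have hB0 : 0 < 1 - 1 / ((d : ℝ) - a) := by
      linarith [one_div_neg.mpr (sub_neg.mpr hda)]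
    obtain ⟨C, hC, hconv⟩ := exists_convolution_bound hd hb.le hab (neg_nonpos.mpr hb.le) hB0
      fun ρ hρ N => sum_convWeight_le_of_lt hd hda hb.le hρ N
    exact ⟨C, hC, fun f g hf hg => ⟨fun _ => hconv f g hf hg, fun h => absurd h.1 hda.not_gt⟩⟩
  by_cases hmid : a < d ∧ (d : ℝ) < a + b
  · have hB0 : 0 < (1 + 1 / ((d : ℝ) - a)) + (1 - 1 / ((d : ℝ) - (a + b))) := by
      linarith [one_div_pos.mpr (sub_pos.mpr hmid.1), one_div_neg.mpr (sub_neg.mpr hmid.2)]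
    obtain ⟨C, hC, hconv⟩ := exists_convolution_bound hd hb.le hab (by linarith) hB0
      fun ρ hρ N => sum_convWeight_le_of_gt hd hmid.1 hmid.2 hρ N
    exact ⟨C, hC, fun f g hf hg => ⟨fun h => absurd h hda, fun _ => hconv f g hf hg⟩⟩
  exact ⟨1, one_pos, fun _ _ _ _ => ⟨fun h => absurd h hda, fun h => absurd h hmid⟩⟩
end
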